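/- Let α ∈ (0,1), let k ≥ 2 and m ≥ 1 be integers, and define λ_k(θ) = (2k)^α · sin(θ/(2k))^α · sin(θ/2 + α(π/2 − θ/(2k))) / sin(θ/2). If β ∈ [(1−α)kπ/(k−α), π) and β + 2mπ ∈ [(2m+1−α)kπ/(k−α), (2m+1)π), then λ_k(β + 2mπ) > λ_k(β). -/

import Mathlib

open Real

/-- Along the boundary-locus curves, the quantity
`λ_k(θ) = (2k)^α sin(θ/(2k))^α sin(θ/2 + α(π/2 − θ/(2k))) / sin(θ/2)`. -/
noncomputable def lamk (α : ℝ) (k : ℕ) (θ : ℝ) : ℝ :=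
  (2 * (k:ℝ)) ^ α * Real.sin (θ / (2 * (k:ℝ))) ^ α *
    Real.sin (θ / 2 + α * (Real.pi / 2 - θ / (2 * (k:ℝ)))) / Real.sin (θ / 2)

/-!
Write `φ(θ) = θ/2 + α(π/2 − θ/(2k))` for the phase in the numerator of `λ_k`. Shifting `θ` by
`2mπ` multiplies both `sin(θ/2)` and `sin φ(θ)` by `(−1)^m` and lowers the phase by `αmπ/k`, so
`λ_k(β + 2mπ)` differs from `λ_k(β)` only in two factors: `sin(θ/(2k))^α`, whose argument grows
inside `(0, π/2)`, and `sin φ`, whose argument `φ(β) − αmπ/k` decreases inside `[π/2, π)`.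
Both factors therefore increase. The lower endpoints `(n − α)kπ/(k − α)` of the hypotheses are
exactly the points where `φ = nπ/2`, and the upper endpoint `(2m+1)π` forces `2m + 1 < k`.
-/

namespace Real

theorem sin_lt_sin_of_pi_div_two_le {x y : ℝ} (hy : π / 2 ≤ y) (hyx : y < x)
    (hx : x ≤ 3 * π / 2) : sin x < sin y := by
  rw [← sin_pi_sub x, ← sin_pi_sub y]
  exact sin_lt_sin_of_lt_of_le_pi_div_two (by linarith) (by linarith) (by linarith)

theorem sin_rpow_lt_sin_rpow {x y α : ℝ} (hα : 0 < α) (hx : 0 < x) (hxy : x < y)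
    (hy : y ≤ π / 2) : sin x ^ α < sin y ^ α :=
  rpow_lt_rpow (sin_pos_of_pos_of_lt_pi hx (by linarith [pi_pos])).le
    (sin_lt_sin_of_lt_of_le_pi_div_two (by linarith [pi_pos]) hy hxy) hα

end Real

namespace Lamk

noncomputable def phase (α : ℝ) (k : ℕ) (θ : ℝ) : ℝ :=
  θ / 2 + α * (π / 2 - θ / (2 * (k:ℝ)))

variable {α : ℝ} {k : ℕ}

theorem lamk_eq (θ : ℝ) :
    lamk α k θ = (2 * (k:ℝ)) ^ α * sin (θ / (2 * (k:ℝ))) ^ α * sin (phase α k θ) / sin (θ / 2) :=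
  rfl

theorem phase_eq (hk : (k:ℝ) ≠ 0) (θ : ℝ) :
    phase α k θ = ((k - α) * θ + α * k * π) / (2 * k) := by
  unfold phase
  field_simp
  ring

theorem phase_add_two_mul_nat_mul_pi (θ : ℝ) (m : ℕ) :
    phase α k (θ + 2 * (m:ℝ) * π) = phase α k θ - α * m * π / k + m * π := by
  unfold phase
  ring

theorem lamk_add_two_mul_nat_mul_pi (θ : ℝ) (m : ℕ) :
    lamk α k (θ + 2 * (m:ℝ) * π) = (2 * (k:ℝ)) ^ α * sin ((θ + 2 * (m:ℝ) * π) / (2 * (k:ℝ))) ^ α *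
      sin (phase α k θ - α * m * π / k) / sin (θ / 2) := by
  have hhalf : (θ + 2 * (m:ℝ) * π) / 2 = θ / 2 + m * π := by ring
  rw [lamk_eq, phase_add_two_mul_nat_mul_pi, hhalf, sin_add_nat_mul_pi, sin_add_nat_mul_pi,
    mul_left_comm, mul_div_mul_left _ _ (pow_ne_zero m (by norm_num))]

theorem le_phase_iff (hk : 0 < (k:ℝ)) (hαk : α < k) (n θ : ℝ) :
    (n - α) * k * π / (k - α) ≤ θ ↔ n * π / 2 ≤ phase α k θ := by
  rw [phase_eq hk.ne', div_le_iff₀ (by linarith), le_div_iff₀ (by positivity)]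
  constructor <;> intro h <;> linarith

theorem phase_lt_pi (hα : α < 1) (hk : 1 ≤ (k:ℝ)) {θ : ℝ} (hθ₀ : 0 ≤ θ) (hθ : θ < π) :
    phase α k θ < π := by
  rw [phase_eq (by positivity), div_lt_iff₀ (by positivity)]
  have hgap : 0 < (1 - α) * (k * π - θ) := mul_pos (by linarith) (by nlinarith [pi_pos])
  nlinarith [mul_le_mul_of_nonneg_left hθ.le (by linarith : (0:ℝ) ≤ k - 1)]

theorem lt_natCast_mul_pi (hα : 0 < α) (hαk : α < k) {n θ : ℝ}
    (hθ₁ : (n - α) * k * π / (k - α) ≤ θ) (hθ₂ : θ < n * π) : θ < k * π := by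
  have h := hθ₁.trans_lt hθ₂
  rw [div_lt_iff₀ (by linarith)] at h
  have hnk : n < k := by nlinarith [mul_pos hα pi_pos]
  nlinarith [pi_pos]

end Lamk

open Lamk in
theorem lamk_shift_gt (α : ℝ) (hα : α ∈ Set.Ioo (0:ℝ) 1) (k m : ℕ) (hk : 2 ≤ k)
    (hm : 1 ≤ m) (β : ℝ)
    (hβ : β ∈ Set.Ico ((1 - α) * (k:ℝ) * π / ((k:ℝ) - α)) π)
    (hβm : β + 2 * (m:ℝ) * π ∈
      Set.Ico ((2 * (m:ℝ) + 1 - α) * (k:ℝ) * π / ((k:ℝ) - α)) ((2 * (m:ℝ) + 1) * π)) :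
    lamk α k (β + 2 * (m:ℝ) * π) > lamk α k β := by
  obtain ⟨hα0, hα1⟩ := hα
  have hk1 : (1:ℝ) ≤ k := by exact_mod_cast (by omega : 1 ≤ k)
  have hm0 : (0:ℝ) < m := by exact_mod_cast (by omega : 0 < m)
  have hαk : α < k := by linarith
  have hβ0 : 0 < β := (div_pos (by have := pi_pos; positivity) (by linarith)).trans_le hβ.1
  have hθk := lt_natCast_mul_pi hα0 hαk hβm.1 hβm.2
  have hφβ : π / 2 ≤ phase α k β := by simpa using (le_phase_iff (by positivity) hαk 1 β).1 hβ.1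
  have hφθ := (le_phase_iff (by positivity) hαk _ _).1 hβm.1
  rw [phase_add_two_mul_nat_mul_pi] at hφθ
  have hφβπ := phase_lt_pi hα1 hk1 hβ0.le hβ.2
  have hpow : sin (β / (2 * k)) ^ α < sin ((β + 2 * (m:ℝ) * π) / (2 * k)) ^ α := by
    apply sin_rpow_lt_sin_rpow hα0 (by positivity)
    · gcongr
      linarith [(by positivity : 0 < 2 * (m:ℝ) * π)]
    · rw [div_le_iff₀ (by positivity)]
      linarith
  have hsin : sin (phase α k β) < sin (phase α k β - α * m * π / k) :=
    sin_lt_sin_of_pi_div_two_le (by linarith) (by linarith [(by positivity : 0 < α * m * π / k)])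
      (by linarith)
  have hsinβ : 0 < sin (β / 2) := sin_pos_of_pos_of_lt_pi (by linarith) (by linarith [hβ.2])
  have hsinφ : 0 < sin (phase α k β) := sin_pos_of_pos_of_lt_pi (by linarith [pi_pos]) hφβπ
  have hsinβk : 0 ≤ sin (β / (2 * k)) := sin_nonneg_of_nonneg_of_le_pi (by positivity)
    ((div_le_iff₀ (by positivity)).2 (by nlinarith [hβ.2, pi_pos]))
  rw [gt_iff_lt, lamk_add_two_mul_nat_mul_pi, lamk_eq]
  gcongr
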